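/- Let X, Y : E → E be differentiable vector fields with div X (x) = 0 and div Y (x) = 0 for all x. Then for every x : E, VectorField.lieBracket ℝ X Y x = curl (fun y => Y y × X y) (x). (The identity [X,Y] = rot(Y × X) for divergence-free fields: the bracket of divergence-free fields is exact divergence-free.) -/

import Mathlib

open MeasureTheory RealInnerProductSpace

noncomputable section

abbrev E : Type := EuclideanSpace ℝ (Fin 3)

/-- The `i`-th standard basis vector of `E`. -/
def e (i : Fin 3) : E := EuclideanSpace.single i 1

/-- The curl (vorticity) of a vector field on `E`. -/
def curl (X : E → E) (x : E) : E :=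
  (WithLp.equiv 2 (Fin 3 → ℝ)).symm
    ![fderiv ℝ X x (e 1) 2 - fderiv ℝ X x (e 2) 1,
      fderiv ℝ X x (e 2) 0 - fderiv ℝ X x (e 0) 2,
      fderiv ℝ X x (e 0) 1 - fderiv ℝ X x (e 1) 0]

/-- The divergence of a vector field on `E`. -/
def div (X : E → E) (x : E) : ℝ := ∑ i, fderiv ℝ X x (e i) i

/-- The cross product on `E`. -/
def cross (a b : E) : E :=
  (WithLp.equiv 2 (Fin 3 → ℝ)).symm
    ![a 1 * b 2 - a 2 * b 1,
      a 2 * b 0 - a 0 * b 2,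
      a 0 * b 1 - a 1 * b 0]

infixl:74 " ×₃ " => cross

/-! Leibniz's rule for the bilinear cross product expands `curl (Y × X)` into the classical
identity `curl (Y × X) = (div X) Y - (div Y) X + DY·X - DX·Y`, valid for any fields differentiable
at the point. The last two terms are `[X, Y]`, and the first two vanish for divergence-free
fields. -/

lemma isBilinearMap_cross : IsBilinearMap ℝ cross := by
  refine ⟨?_, ?_, ?_, ?_⟩ <;> intros <;> ext i <;> fin_cases i <;> simp [cross] <;> ring

lemma fderiv_cross_apply {f g : E → E} {x : E} (hf : DifferentiableAt ℝ f x)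
    (hg : DifferentiableAt ℝ g x) (v : E) :
    fderiv ℝ (fun y => f y ×₃ g y) x v = fderiv ℝ f x v ×₃ g x + f x ×₃ fderiv ℝ g x v := by
  have h := isBilinearMap_cross.toContinuousBilinearMap.fderiv_of_bilinear hf hg
  simp only [IsBilinearMap.toContinuousBilinearMap_apply] at h
  simp [h, add_comm]

lemma EuclideanSpace.continuousLinearMap_apply_eq_sum {𝕜 ι F : Type*} [RCLike 𝕜] [Fintype ι]
    [DecidableEq ι] [AddCommMonoid F] [Module 𝕜 F] [TopologicalSpace F]
    (L : EuclideanSpace 𝕜 ι →L[𝕜] F) (v : EuclideanSpace 𝕜 ι) :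
    L v = ∑ i, v i • L (EuclideanSpace.single i 1) := by
  conv_lhs => rw [← (EuclideanSpace.basisFun ι 𝕜).sum_repr v]
  simp

theorem curl_cross {X Y : E → E} {x : E} (hX : DifferentiableAt ℝ X x)
    (hY : DifferentiableAt ℝ Y x) :
    curl (fun y => Y y ×₃ X y) x =
      div X x • Y x - div Y x • X x + VectorField.lieBracket ℝ X Y x := by
  ext j
  rw [VectorField.lieBracket,
    EuclideanSpace.continuousLinearMap_apply_eq_sum (fderiv ℝ Y x) (X x),
    EuclideanSpace.continuousLinearMap_apply_eq_sum (fderiv ℝ X x) (Y x)]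
  simp only [curl, div, fderiv_cross_apply hY hX]
  fin_cases j <;> simp [e, cross, Fin.sum_univ_three] <;> ring

/-- For divergence-free fields, `[X, Y] = curl (Y × X)`. -/
theorem lieBracket_eq_curl_cross (X Y : E → E)
    (hX : Differentiable ℝ X) (hY : Differentiable ℝ Y)
    (hdX : ∀ x, div X x = 0) (hdY : ∀ x, div Y x = 0) (x : E) :
    VectorField.lieBracket ℝ X Y x = curl (fun y => Y y ×₃ X y) x := by
  simp [curl_cross (hX x) (hY x), hdX, hdY]
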